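/- arXiv:1102.3622 — 2 statements merged into one kernel-verified Lean document; each statement's English description precedes it below -/
import Mathlib

section
/- Let k be a field and E a nonempty finite set. Let (C_*, ∂) be the one-sided Koszul complex: C_m = ⊕_{G ⊆ E, |G| = m} Λ^m(k^G), ∂(e_1∧…∧e_m) = Σ_{i=1}^{m} (−1)^{i} e_1∧…∧ê_i∧…∧e_m. Let (Ñ_*, d) be the one-sided normalized bar complex: Ñ_m is the free k-vector space on tuples (A_1, …, A_m; F) where A_1, …, A_m are pairwise disjoint nonempty subsets of E, F is a further disjoint (possibly empty) subset, and A_1 ∪ … ∪ A_m ∪ F = E, with d(A_1, …, A_m; F) = Σ_{i=1}^{m−1} (−1)^{i} (A_1, …, A_i ∪ A_{i+1}, …, A_m; F) + (−1)^{m} (A_1, …, A_{m−1}; F ∪ A_m). Define κ : C_m → Ñ_m by κ(e_1∧…∧e_m) = Σ_{σ ∈ S_m} sgn(σ) ({e_{σ(1)}}, …, {e_{σ(m)}}; E ∖ {e_1, …, e_m}). Then κ is a chain map, both complexes are exact (H_m = 0 for all m ≥ 0), and in particular κ is a quasi-isomorphism. -/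
open Finset

/-- `G` is an `m`-element subset of `E`. -/
def IsKSub {α : Type} [DecidableEq α] (E : Finset α) (m : ℕ) (G : Finset α) : Prop :=
  G ⊆ E ∧ G.card = m

instance {α : Type} [DecidableEq α] (E : Finset α) (m : ℕ) :
    DecidablePred (IsKSub E m) := fun _ => by unfold IsKSub; infer_instance

/-- `(A_1, …, A_r; F)`: a tuple of length `r + 1` of pairwise disjoint subsets of
`E` with union `E`, whose first `r` blocks are nonempty (the last block `F` may be
empty). -/
def IsLDecomp {α : Type} [DecidableEq α] (E : Finset α) {r : ℕ}
    (f : Fin (r + 1) → Finset α) : Prop :=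
  (∀ i : Fin (r + 1), i.val < r → f i ≠ ∅) ∧
    (∀ i j, i ≠ j → Disjoint (f i) (f j)) ∧ Finset.univ.sup f = E

instance {α : Type} [DecidableEq α] (E : Finset α) (r : ℕ) :
    DecidablePred (IsLDecomp E (r := r)) := fun _ => by unfold IsLDecomp; infer_instance

/-- The basis vector of the free `k`-module indexed by `x`, if `x` satisfies the
predicate `P`; `0` otherwise (in the intended uses `P x` always holds). -/
noncomputable def bas (k : Type) [Field k] {β : Type} (P : β → Prop) [DecidablePred P]
    (x : β) : {y : β // P y} →₀ k :=
  if h : P x then Finsupp.single ⟨x, h⟩ (1 : k) else 0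

/-- Merge blocks `i` and `i+1` of a tuple of length `r+1`. -/
def merge {α : Type} [DecidableEq α] {r : ℕ} (i : ℕ) (f : Fin (r + 1) → Finset α)
    (j : Fin r) : Finset α :=
  if j.val < i then f j.castSucc
  else if j.val = i then f j.castSucc ∪ f j.succ
  else f j.succ

/-- `C_m = ⊕_{G ⊆ E, |G| = m} Λ^m(k^G)`: the free `k`-module on `m`-element subsets
of `E`, the summand of `G` encoded by the canonical basis vector given by the
increasing enumeration of `G`. -/
noncomputable abbrev CMod (k : Type) [Field k] {α : Type} [DecidableEq α]
    (E : Finset α) (m : ℕ) : Type :=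
  {G : Finset α // IsKSub E m G} →₀ k

/-- `Ñ_m`: the free `k`-module on tuples `(A_1, …, A_m; F)` as above. -/
noncomputable abbrev NtMod (k : Type) [Field k] {α : Type} [DecidableEq α]
    (E : Finset α) (m : ℕ) : Type :=
  {f : Fin (m + 1) → Finset α // IsLDecomp E (r := m) f} →₀ k

/-- `∂ : C_{m+1} → C_m`, `∂(e_1∧…∧e_r) = Σ_i (−1)^i e_1∧…∧ê_i∧…∧e_r`. -/
noncomputable def cD (k : Type) [Field k] {α : Type} [DecidableEq α] [LinearOrder α]
    (E : Finset α) (m : ℕ) : CMod k E (m + 1) →ₗ[k] CMod k E m :=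
  Finsupp.lsum k fun q => LinearMap.toSpanSingleton k _
    (∑ a ∈ q.val,
      ((-1 : k) ^ ((q.val.sort (· ≤ ·)).idxOf a + 1)) •
        bas k (IsKSub E m) (q.val.erase a))

/-- `d : Ñ_{m+1} → Ñ_m`: `d(A_1, …, A_{m+1}; F) = Σ_{i=1}^{m} (−1)^i
(A_1, …, A_i ∪ A_{i+1}, …, A_{m+1}; F) + (−1)^{m+1} (A_1, …, A_m; F ∪ A_{m+1})`,
i.e. the merge at 0-based position `i` carries the sign `(−1)^{i+1}`. -/
noncomputable def ntD (k : Type) [Field k] {α : Type} [DecidableEq α]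
    (E : Finset α) (m : ℕ) : NtMod k E (m + 1) →ₗ[k] NtMod k E m :=
  Finsupp.lsum k fun q => LinearMap.toSpanSingleton k _
    (∑ i ∈ Finset.range (m + 1),
      ((-1 : k) ^ (i + 1)) • bas k (IsLDecomp E (r := m)) (merge i q.val))

/-- The singleton `{e_{i+1}}` of the element at (0-based) position `i` in the
increasing enumeration of `G` (`∅` if `i` is out of range). -/
def singBlock {α : Type} [LinearOrder α] (G : Finset α) (i : ℕ) : Finset α :=
  ((G.sort (· ≤ ·))[i]?).elim ∅ (fun a => {a})

/-- A permutation of `Fin m` as a function on `ℕ` (identity out of range). -/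
def permVal {m : ℕ} (σ : Equiv.Perm (Fin m)) (i : ℕ) : ℕ :=
  if h : i < m then (σ ⟨i, h⟩).val else i

/-- The tuple `({e_{σ(1)}}, …, {e_{σ(m)}}; E ∖ G)` associated to an `m`-element
subset `G ⊆ E` and a permutation `σ ∈ S_m`. -/
def kapTuple6 {α : Type} [DecidableEq α] [LinearOrder α] {m : ℕ} (E G : Finset α)
    (σ : Equiv.Perm (Fin m)) (j : Fin (m + 1)) : Finset α :=
  if j.val = m then E \ G else singBlock G (permVal σ j.val)

/-- `κ : C_m → Ñ_m`,
`κ(e_1∧…∧e_m) = Σ_{σ ∈ S_m} sgn(σ) ({e_{σ(1)}}, …, {e_{σ(m)}}; E ∖ G)`. -/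
noncomputable def kap6 (k : Type) [Field k] {α : Type} [DecidableEq α] [LinearOrder α]
    (E : Finset α) (m : ℕ) : CMod k E m →ₗ[k] NtMod k E m :=
  Finsupp.lsum k fun q => LinearMap.toSpanSingleton k _
    (∑ σ : Equiv.Perm (Fin m),
      ((Equiv.Perm.sign σ : ℤ) : k) • bas k (IsLDecomp E (r := m)) (kapTuple6 E q.val σ))

/-!
Both complexes are contractible. On `Ñ_*` the contracting homotopy moves the free block into a
new last slot, `(A₁, …, A_m; F) ↦ ±(A₁, …, A_m, F; ∅)` (and kills tuples with `F = ∅`); on `C_*`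
it is wedging with `e = min E`, which in the sorted basis is `G ↦ -(insert e G)`.

For `κ`, apply `d` to `Σ_σ sgn σ ({e_σ(1)}, …, {e_σ(m+1)}; E ∖ G)`: merging two adjacent singleton
blocks gives the same tuple for `σ` and `σ ∘ (i i+1)`, so those terms cancel in pairs; merging the
last singleton `{e_σ(m+1)}` into `E ∖ G` leaves `E ∖ (G ∖ {e_p})` with `p = σ(m+1)`, and writing
`σ` as `p` together with a permutation `τ` of the remaining positions turns the sum into `κ ∂`.
-/

namespace OneSidedKoszul

open Equiv

lemma exists_apply_eq_of_homotopy {R M₀ M₁ M₂ : Type*} [Semiring R] [AddCommMonoid M₀]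
    [AddCommMonoid M₁] [AddCommMonoid M₂] [Module R M₀] [Module R M₁] [Module R M₂]
    {d : M₂ →ₗ[R] M₁} {d' : M₁ →ₗ[R] M₀} {h : M₁ →ₗ[R] M₂} {h' : M₀ →ₗ[R] M₁}
    (hh : d.comp h + h'.comp d' = LinearMap.id) {x : M₁} (hx : d' x = 0) : ∃ y, d y = x :=
  ⟨h x, by simpa [hx] using LinearMap.congr_fun hh x⟩

section FreeModule

variable {k : Type} [Field k] {β : Type} {P : β → Prop} [DecidablePred P]
  {M : Type} [AddCommGroup M] [Module k M]

lemma bas_of_pos {x : β} (h : P x) : bas k P x = Finsupp.single ⟨x, h⟩ 1 := dif_pos h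

lemma lsum_toSpanSingleton_bas (v : {y // P y} → M) {x : β} (h : P x) :
    Finsupp.lsum k (fun q => LinearMap.toSpanSingleton k M (v q)) (bas k P x) = v ⟨x, h⟩ := by
  rw [bas_of_pos h, Finsupp.lsum_single, LinearMap.toSpanSingleton_apply, one_smul]

lemma linearMap_ext_bas {f g : ({y // P y} →₀ k) →ₗ[k] M}
    (h : ∀ x, P x → f (bas k P x) = g (bas k P x)) : f = g :=
  Finsupp.lhom_ext' fun q => LinearMap.ext_ring <| by
    simpa [bas_of_pos q.2] using h q.1 q.2

end FreeModule

section Tuples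

variable {α : Type} [DecidableEq α] {E : Finset α}

lemma mem_sup_univ_fin_succ {n : ℕ} (f : Fin (n + 1) → Finset α) (x : α) :
    x ∈ univ.sup f ↔ (∃ i : Fin n, x ∈ f i.castSucc) ∨ x ∈ f (Fin.last n) := by
  simp only [Finset.mem_sup, Finset.mem_univ, true_and, Fin.exists_fin_succ']

variable {r : ℕ} {i : ℕ}

lemma merge_apply_of_lt (f : Fin (r + 1) → Finset α) {j : Fin r} (h : j.val < i) :
    merge i f j = f j.castSucc := if_pos h

lemma merge_apply_of_eq (f : Fin (r + 1) → Finset α) {j : Fin r} (h : j.val = i) :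
    merge i f j = f j.castSucc ∪ f j.succ := by
  rw [merge, if_neg (by omega), if_pos h]

lemma merge_apply_of_gt (f : Fin (r + 1) → Finset α) {j : Fin r} (h : i < j.val) :
    merge i f j = f j.succ := by
  rw [merge, if_neg (by omega), if_neg (by omega)]

lemma merge_last_of_lt (f : Fin (r + 2) → Finset α) (hi : i < r) :
    merge i f (Fin.last r) = f (Fin.last (r + 1)) := by
  rw [merge_apply_of_gt f (by simpa using hi), Fin.succ_last]

lemma merge_self_last (f : Fin (r + 2) → Finset α) :
    merge r f (Fin.last r) = f (Fin.last r).castSucc ∪ f (Fin.last (r + 1)) := by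
  rw [merge_apply_of_eq f (by simp), Fin.succ_last]

lemma merge_snoc (f : Fin (r + 1) → Finset α) (hi : i < r) :
    merge i (Fin.snoc f ∅) = Fin.snoc (merge i f) ∅ := by
  funext j
  refine Fin.lastCases ?_ (fun j => ?_) j
  · rw [merge_last_of_lt _ hi, Fin.snoc_last, Fin.snoc_last]
  · simp only [merge, Fin.val_castSucc, Fin.succ_castSucc, Fin.snoc_castSucc]

lemma merge_self_snoc (f : Fin (r + 1) → Finset α) : merge r (Fin.snoc f ∅) = f := by
  funext j
  refine Fin.lastCases ?_ (fun j => ?_) j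
  · rw [merge_self_last, Fin.snoc_castSucc, Fin.snoc_last, union_empty]
  · rw [merge_apply_of_lt _ (by simp), Fin.snoc_castSucc]

lemma snoc_merge_self (f : Fin (r + 2) → Finset α) (h : f (Fin.last (r + 1)) = ∅) :
    Fin.snoc (merge r f) ∅ = f := by
  funext j
  refine Fin.lastCases ?_ (fun j => ?_) j
  · rw [Fin.snoc_last, h]
  · rw [Fin.snoc_castSucc]
    refine Fin.lastCases ?_ (fun j => ?_) j
    · rw [merge_self_last, h, union_empty]
    · rw [merge_apply_of_lt _ (by simp)]

lemma merge_comp_swap (f : Fin (r + 2) → Finset α) (j : Fin (r + 1)) :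
    merge j (f ∘ swap j.castSucc j.succ) = merge j f := by
  funext l
  rcases lt_trichotomy l.val j.val with h | h | h
  · rw [merge_apply_of_lt _ h, merge_apply_of_lt _ h, Function.comp_apply,
      swap_apply_of_ne_of_ne (Fin.ne_of_val_ne ?_) (Fin.ne_of_val_ne ?_)] <;>
      simp only [Fin.val_castSucc, Fin.val_succ] <;> omega
  · obtain rfl : l = j := Fin.ext h
    rw [merge_apply_of_eq _ rfl, merge_apply_of_eq _ rfl, Function.comp_apply, Function.comp_apply,
      swap_apply_left, swap_apply_right, union_comm]
  · rw [merge_apply_of_gt _ h, merge_apply_of_gt _ h, Function.comp_apply,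
      swap_apply_of_ne_of_ne (Fin.ne_of_val_ne ?_) (Fin.ne_of_val_ne ?_)] <;>
      simp only [Fin.val_castSucc, Fin.val_succ] <;> omega

lemma sup_merge (f : Fin (r + 2) → Finset α) (hi : i ≤ r) :
    univ.sup (merge i f) = univ.sup f := by
  ext x
  simp only [Finset.mem_sup, Finset.mem_univ, true_and]
  constructor
  · rintro ⟨j, hx⟩
    unfold merge at hx
    split_ifs at hx
    exacts [⟨_, hx⟩, (mem_union.1 hx).elim (⟨_, ·⟩) (⟨_, ·⟩), ⟨_, hx⟩]
  · rintro ⟨l, hx⟩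
    rcases lt_or_ge l.val i with h | h
    · exact ⟨⟨l, by omega⟩, by rwa [merge_apply_of_lt f h]⟩
    rcases le_or_gt l.val (i + 1) with h' | h'
    · refine ⟨⟨i, by omega⟩, ?_⟩
      rw [merge_apply_of_eq (j := ⟨i, _⟩) f rfl, mem_union]
      rcases (show l.val = i ∨ l.val = i + 1 by omega) with h'' | h''
      · exact .inl (by rwa [show l = ⟨i, _⟩ from Fin.ext h''] at hx)
      · exact .inr (by rwa [show l = ⟨i + 1, _⟩ from Fin.ext h''] at hx)
    · refine ⟨⟨l - 1, by omega⟩, ?_⟩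
      rw [merge_apply_of_gt f (show i < l.val - 1 by omega)]
      convert hx using 2
      ext
      simp only [Fin.val_succ]
      omega
lemma isLDecomp_snoc {f : Fin (r + 1) → Finset α} (hf : IsLDecomp E f)
    (hne : f (Fin.last r) ≠ ∅) : IsLDecomp E (r := r + 1) (Fin.snoc f ∅) := by
  obtain ⟨hf_ne, hf_disj, hf_sup⟩ := hf
  refine ⟨fun j hj => ?_, fun a b hab => ?_, ?_⟩
  · induction j using Fin.lastCases with
    | last => simp at hj
    | cast j =>
      rw [Fin.snoc_castSucc]
      induction j using Fin.lastCases with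
      | last => exact hne
      | cast j => exact hf_ne _ (by simp)
  · induction a using Fin.lastCases <;> induction b using Fin.lastCases <;>
      simp only [Fin.snoc_castSucc, Fin.snoc_last, disjoint_empty_left, disjoint_empty_right]
    exact hf_disj _ _ fun h => hab (h ▸ rfl)
  · ext x
    rw [mem_sup_univ_fin_succ, ← hf_sup]
    simp [Finset.mem_sup]

lemma isLDecomp_merge {f : Fin (r + 2) → Finset α} (hf : IsLDecomp E (r := r + 1) f)
    (hi : i ≤ r) : IsLDecomp E (r := r) (merge i f) := by
  obtain ⟨hf_ne, hf_disj, hf_sup⟩ := hf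
  have disj : ∀ x y : Fin (r + 2), x.val ≠ y.val → Disjoint (f x) (f y) :=
    fun x y h => hf_disj x y (Fin.ne_of_val_ne h)
  refine ⟨fun j hj => ?_, fun a b hab => ?_, ?_⟩
  · rcases lt_trichotomy j.val i with h | h | h
    · rw [merge_apply_of_lt f h]; exact hf_ne _ (by simp only [Fin.val_castSucc]; omega)
    · rw [merge_apply_of_eq f h]
      exact fun he => hf_ne j.castSucc (by simp only [Fin.val_castSucc]; omega)
        (union_eq_empty.1 he).1
    · rw [merge_apply_of_gt f h]; exact hf_ne _ (by simp only [Fin.val_succ]; omega)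
  · have hab := Fin.val_ne_of_ne hab
    unfold merge
    split_ifs <;> (try rw [disjoint_union_left]) <;> (try rw [disjoint_union_right]) <;>
      (repeat' constructor) <;>
      first | omega | (apply disj; simp only [Fin.val_castSucc, Fin.val_succ]; omega)
  · rw [sup_merge f hi, hf_sup]

end Tuples

section BarComplex

variable (k : Type) [Field k] {α : Type} [DecidableEq α]

noncomputable def barHomotopy (E : Finset α) (m : ℕ) : NtMod k E m →ₗ[k] NtMod k E (m + 1) :=
  Finsupp.lsum k fun q => LinearMap.toSpanSingleton k _
    (if q.val (Fin.last m) = ∅ then 0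
     else (-1 : k) ^ (m + 1) • bas k (IsLDecomp E (r := m + 1)) (Fin.snoc q.val ∅))

variable {k} {E : Finset α} {m : ℕ}

lemma ntD_bas {f : Fin (m + 2) → Finset α} (hf : IsLDecomp E (r := m + 1) f) :
    ntD k E m (bas k (IsLDecomp E) f) =
      ∑ i ∈ range (m + 1), (-1 : k) ^ (i + 1) • bas k (IsLDecomp E) (merge i f) :=
  lsum_toSpanSingleton_bas _ hf

lemma barHomotopy_bas {f : Fin (m + 1) → Finset α} (hf : IsLDecomp E f) :
    barHomotopy k E m (bas k (IsLDecomp E) f) =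
      if f (Fin.last m) = ∅ then 0
      else (-1 : k) ^ (m + 1) • bas k (IsLDecomp E (r := m + 1)) (Fin.snoc f ∅) :=
  lsum_toSpanSingleton_bas _ hf

lemma ntD_barHomotopy_bas {f : Fin (m + 1) → Finset α} (hf : IsLDecomp E f)
    (hne : f (Fin.last m) ≠ ∅) :
    ntD k E m (barHomotopy k E m (bas k (IsLDecomp E) f)) =
      bas k (IsLDecomp E) f + ∑ i ∈ range m,
        (-1 : k) ^ (i + m) • bas k (IsLDecomp E) (Fin.snoc (merge i f) ∅) := by
  rw [barHomotopy_bas hf, if_neg hne, map_smul, ntD_bas (isLDecomp_snoc hf hne),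
    sum_range_succ, merge_self_snoc, smul_add, smul_smul, ← pow_add,
    Even.neg_one_pow ⟨_, rfl⟩, one_smul, add_comm, smul_sum]
  congr 1
  refine sum_congr rfl fun i hi => ?_
  rw [merge_snoc f (mem_range.1 hi), smul_smul, ← pow_add]
  ring_nf

lemma barHomotopy_ntD_bas {f : Fin (m + 2) → Finset α} (hf : IsLDecomp E (r := m + 1) f)
    (hne : f (Fin.last (m + 1)) ≠ ∅) :
    barHomotopy k E m (ntD k E m (bas k (IsLDecomp E) f)) =
      ∑ i ∈ range (m + 1),
        (-1 : k) ^ (i + m) • bas k (IsLDecomp E) (Fin.snoc (merge i f) ∅) := by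
  rw [ntD_bas hf, map_sum]
  refine sum_congr rfl fun i hi => ?_
  have hi : i ≤ m := Nat.lt_succ_iff.1 (mem_range.1 hi)
  have hne' : merge i f (Fin.last m) ≠ ∅ := by
    rcases hi.lt_or_eq with hi | rfl
    · rwa [merge_last_of_lt f hi]
    · rw [merge_self_last, Ne, union_eq_empty]; exact fun h => hne h.2
  rw [map_smul, barHomotopy_bas (isLDecomp_merge hf hi), if_neg hne', smul_smul, ← pow_add]
  ring_nf

lemma barHomotopy_ntD_bas_of_last_eq_empty {f : Fin (m + 2) → Finset α}
    (hf : IsLDecomp E (r := m + 1) f) (hF : f (Fin.last (m + 1)) = ∅) :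
    barHomotopy k E m (ntD k E m (bas k (IsLDecomp E) f)) = bas k (IsLDecomp E) f := by
  have hlast : merge m f (Fin.last m) ≠ ∅ := by
    rw [merge_self_last, hF, union_empty]
    exact hf.1 _ (by simp)
  rw [ntD_bas hf, map_sum, sum_range_succ, sum_eq_zero fun i hi => ?_, zero_add, map_smul,
    barHomotopy_bas (isLDecomp_merge hf le_rfl), if_neg hlast, smul_smul, ← pow_add,
    Even.neg_one_pow ⟨_, rfl⟩, one_smul, snoc_merge_self f hF]
  have hi := mem_range.1 hi
  rw [map_smul, barHomotopy_bas (isLDecomp_merge hf hi.le), if_pos (by rwa [merge_last_of_lt f hi]),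
    smul_zero]

theorem ntD_comp_barHomotopy_add_barHomotopy_comp_ntD :
    (ntD k E (m + 1)).comp (barHomotopy k E (m + 1)) + (barHomotopy k E m).comp (ntD k E m) =
      LinearMap.id := by
  refine linearMap_ext_bas fun f hf => ?_
  simp only [LinearMap.add_apply, LinearMap.comp_apply, LinearMap.id_apply]
  by_cases hF : f (Fin.last (m + 1)) = ∅
  · rw [barHomotopy_bas hf, if_pos hF, map_zero, zero_add,
      barHomotopy_ntD_bas_of_last_eq_empty hf hF]
  · rw [ntD_barHomotopy_bas hf hF, barHomotopy_ntD_bas hf hF, add_assoc, ← sum_add_distrib,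
      sum_eq_zero fun i _ => ?_, add_zero]
    rw [← add_smul, ← add_assoc, pow_succ, mul_neg_one, neg_add_cancel, zero_smul]

theorem ntD_zero_comp_barHomotopy (hE : E.Nonempty) :
    (ntD k E 0).comp (barHomotopy k E 0) = LinearMap.id := by
  refine linearMap_ext_bas fun f hf => ?_
  have hF : f (Fin.last 0) = E := by simpa [Fin.last_zero] using hf.2.2
  rw [LinearMap.comp_apply, ntD_barHomotopy_bas hf (hF ▸ hE.ne_empty), sum_range_zero, add_zero,
    LinearMap.id_apply]

end BarComplex

section KoszulComplex

variable (k : Type) [Field k] {α : Type} [DecidableEq α]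

noncomputable def koszulHomotopy (E : Finset α) (e : α) (m : ℕ) :
    CMod k E m →ₗ[k] CMod k E (m + 1) :=
  Finsupp.lsum k fun q => LinearMap.toSpanSingleton k _
    (if e ∈ q.val then 0 else -bas k (IsKSub E (m + 1)) (insert e q.val))

variable {k} {E : Finset α} {e : α} {m : ℕ} {G : Finset α}

lemma koszulHomotopy_bas (hG : IsKSub E m G) :
    koszulHomotopy k E e m (bas k (IsKSub E m) G) =
      if e ∈ G then 0 else -bas k (IsKSub E (m + 1)) (insert e G) :=
  lsum_toSpanSingleton_bas _ hG

lemma isKSub_erase (hG : IsKSub E (m + 1) G) {a : α} (ha : a ∈ G) : IsKSub E m (G.erase a) :=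
  ⟨(erase_subset _ _).trans hG.1, by rw [card_erase_of_mem ha, hG.2, Nat.add_sub_cancel]⟩

lemma isKSub_insert (hG : IsKSub E m G) (heE : e ∈ E) (he : e ∉ G) :
    IsKSub E (m + 1) (insert e G) :=
  ⟨insert_subset heE hG.1, by rw [card_insert_of_notMem he, hG.2]⟩

variable [LinearOrder α]

lemma cD_bas (hG : IsKSub E (m + 1) G) :
    cD k E m (bas k (IsKSub E (m + 1)) G) =
      ∑ a ∈ G,
        (-1 : k) ^ ((G.sort (· ≤ ·)).idxOf a + 1) • bas k (IsKSub E m) (G.erase a) :=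
  lsum_toSpanSingleton_bas _ hG

lemma idxOf_sort_eq_zero_of_le (hmin : ∀ b ∈ G, e ≤ b) (he : e ∈ G) :
    (G.sort (· ≤ ·)).idxOf e = 0 := by
  rw [← insert_erase he, sort_insert _ (fun b hb => hmin b (mem_of_mem_erase hb))
    (notMem_erase e G), List.idxOf_cons_self]

lemma cD_koszulHomotopy_bas (hG : IsKSub E m G) (heE : e ∈ E) (hmin : ∀ b ∈ G, e ≤ b)
    (he : e ∉ G) :
    cD k E m (koszulHomotopy k E e m (bas k (IsKSub E m) G)) =
      bas k (IsKSub E m) G + ∑ a ∈ G, (-1 : k) ^ ((G.sort (· ≤ ·)).idxOf a + 1) •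
        bas k (IsKSub E m) (insert e (G.erase a)) := by
  rw [koszulHomotopy_bas hG, if_neg he, map_neg, cD_bas (isKSub_insert hG heE he), sum_insert he,
    erase_insert he, sort_insert _ hmin he, List.idxOf_cons_self, neg_add, ← sum_neg_distrib]
  congr 1
  · simp
  refine sum_congr rfl fun a ha => ?_
  have hae : e ≠ a := ne_of_mem_of_not_mem ha he |>.symm
  rw [List.idxOf_cons_ne _ hae, erase_insert_of_ne hae, ← neg_smul, pow_succ _ (_ + 1)]
  simp

lemma koszulHomotopy_cD_bas_of_mem (hG : IsKSub E (m + 1) G) (hmin : ∀ b ∈ G, e ≤ b)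
    (he : e ∈ G) :
    koszulHomotopy k E e m (cD k E m (bas k (IsKSub E (m + 1)) G)) =
      bas k (IsKSub E (m + 1)) G := by
  rw [cD_bas hG, map_sum, sum_eq_single_of_mem e he fun a ha hae => ?_]
  · rw [map_smul, koszulHomotopy_bas (isKSub_erase hG he), if_neg (notMem_erase e G),
      insert_erase he, idxOf_sort_eq_zero_of_le hmin he]
    simp
  · rw [map_smul, koszulHomotopy_bas (isKSub_erase hG ha),
      if_pos (mem_erase.2 ⟨Ne.symm hae, he⟩), smul_zero]

lemma koszulHomotopy_cD_bas_of_notMem (hG : IsKSub E (m + 1) G) (he : e ∉ G) :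
    koszulHomotopy k E e m (cD k E m (bas k (IsKSub E (m + 1)) G)) =
      -∑ a ∈ G, (-1 : k) ^ ((G.sort (· ≤ ·)).idxOf a + 1) •
        bas k (IsKSub E (m + 1)) (insert e (G.erase a)) := by
  rw [cD_bas hG, map_sum, ← sum_neg_distrib]
  refine sum_congr rfl fun a ha => ?_
  rw [map_smul, koszulHomotopy_bas (isKSub_erase hG ha), if_neg fun h => he (mem_of_mem_erase h),
    smul_neg]

theorem cD_comp_koszulHomotopy_add_koszulHomotopy_comp_cD (he : IsLeast (E : Set α) e) :
    (cD k E (m + 1)).comp (koszulHomotopy k E e (m + 1)) +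
      (koszulHomotopy k E e m).comp (cD k E m) = LinearMap.id := by
  refine linearMap_ext_bas fun G hG => ?_
  have hmin : ∀ b ∈ G, e ≤ b := fun b hb => he.2 (hG.1 hb)
  simp only [LinearMap.add_apply, LinearMap.comp_apply, LinearMap.id_apply]
  by_cases heG : e ∈ G
  · rw [koszulHomotopy_bas hG, if_pos heG, map_zero, zero_add,
      koszulHomotopy_cD_bas_of_mem hG hmin heG]
  · rw [cD_koszulHomotopy_bas hG he.1 hmin heG, koszulHomotopy_cD_bas_of_notMem hG heG,
      add_neg_cancel_right]

theorem cD_zero_comp_koszulHomotopy (he : e ∈ E) :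
    (cD k E 0).comp (koszulHomotopy k E e 0) = LinearMap.id := by
  refine linearMap_ext_bas fun G hG => ?_
  obtain rfl : G = ∅ := card_eq_zero.1 hG.2
  rw [LinearMap.comp_apply, cD_koszulHomotopy_bas hG he (by simp) (notMem_empty e), sum_empty,
    add_zero, LinearMap.id_apply]

end KoszulComplex

section Permutations

lemma sum_sign_smul_eq_zero_of_mul_swap {k M ι : Type*} [Ring k] [AddCommGroup M] [Module k M]
    [DecidableEq ι] [Fintype ι] (f : Perm ι → M) {a b : ι} (hab : a ≠ b)
    (hf : ∀ σ, f (σ * swap a b) = f σ) :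
    ∑ σ : Perm ι, ((Perm.sign σ : ℤ) : k) • f σ = 0 :=
  sum_ninvolution (fun σ => σ * swap a b)
    (fun σ => by simp [hf, Perm.sign_swap hab])
    (fun σ _ h => hab (swap_eq_one_iff.1 (mul_eq_left.1 h)))
    (fun _ => mem_univ _) (fun σ => mul_swap_mul_self a b σ)

variable {m : ℕ}

/-- The permutation with `σ (last m) = p` and `σ ∘ castSucc = p.succAbove ∘ τ`. -/
def succAbovePerm (p : Fin (m + 1)) (τ : Perm (Fin m)) : Perm (Fin (m + 1)) :=
  p.cycleRange.symm * Perm.decomposeFin.symm (0, τ) * finRotate (m + 1)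

lemma succAbovePerm_last (p : Fin (m + 1)) (τ : Perm (Fin m)) :
    succAbovePerm p τ (Fin.last m) = p := by
  simp [succAbovePerm]

lemma succAbovePerm_castSucc (p : Fin (m + 1)) (τ : Perm (Fin m)) (i : Fin m) :
    succAbovePerm p τ i.castSucc = p.succAbove (τ i) := by
  simp [succAbovePerm, Fin.coeSucc_eq_succ]

lemma sign_succAbovePerm (p : Fin (m + 1)) (τ : Perm (Fin m)) :
    Perm.sign (succAbovePerm p τ) = (-1) ^ (p.val + m) * Perm.sign τ := by
  simp only [succAbovePerm, map_mul, Perm.sign_symm, Fin.sign_cycleRange,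
    Perm.decomposeFin.symm_sign, if_pos, sign_finRotate, Nat.add_sub_cancel, pow_add]
  rw [one_mul, mul_right_comm]

lemma succAbovePerm_bijective :
    Function.Bijective fun x : Fin (m + 1) × Perm (Fin m) => succAbovePerm x.1 x.2 := by
  refine (Fintype.bijective_iff_injective_and_card _).2
    ⟨fun ⟨p, τ⟩ ⟨p', τ'⟩ h => ?_, ?_⟩
  · have h := congrFun (congrArg DFunLike.coe h)
    obtain rfl : p = p' := by simpa [succAbovePerm_last] using h (Fin.last m)
    refine Prod.ext rfl (Equiv.ext fun i => p.succAbove_right_injective ?_)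
    simpa [succAbovePerm_castSucc] using h i.castSucc
  · simp [Fintype.card_perm, Nat.factorial_succ]

end Permutations

section Antisymmetrization

variable {α : Type} [LinearOrder α] {G : Finset α} {m : ℕ}

lemma singBlock_eq_orderEmbOfFin (hG : G.card = m) (i : Fin m) :
    singBlock G i = {G.orderEmbOfFin hG i} := by
  rw [singBlock, List.getElem?_eq_getElem (by simp [hG]), orderEmbOfFin_apply]
  rfl

variable [DecidableEq α] {E : Finset α}

lemma orderEmbOfFin_erase (hG : G.card = m + 1) (p : Fin (m + 1))
    (h : (G.erase (G.orderEmbOfFin hG p)).card = m) (i : Fin m) :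
    (G.erase (G.orderEmbOfFin hG p)).orderEmbOfFin h i = G.orderEmbOfFin hG (p.succAbove i) := by
  refine (congrFun (orderEmbOfFin_unique h (f := G.orderEmbOfFin hG ∘ p.succAbove)
    (fun j => mem_erase.2 ⟨?_, orderEmbOfFin_mem _ _ _⟩)
    ((G.orderEmbOfFin hG).strictMono.comp p.strictMono_succAbove)) i).symm
  exact (G.orderEmbOfFin hG).injective.ne (p.succAbove_ne j)

lemma kapTuple6_castSucc (σ : Perm (Fin m)) (i : Fin m) :
    kapTuple6 E G σ i.castSucc = singBlock G (σ i) := by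
  rw [kapTuple6, if_neg (by simp [i.isLt.ne]), permVal, dif_pos (by simp)]
  rfl

lemma kapTuple6_last (σ : Perm (Fin m)) : kapTuple6 E G σ (Fin.last m) = E \ G :=
  if_pos rfl

lemma kapTuple6_mul_swap (σ : Perm (Fin m)) (a b : Fin m) :
    kapTuple6 E G (σ * swap a b) = kapTuple6 E G σ ∘ swap a.castSucc b.castSucc := by
  funext j
  induction j using Fin.lastCases with
  | last =>
    rw [Function.comp_apply, swap_apply_of_ne_of_ne (Fin.castSucc_lt_last a).ne'
      (Fin.castSucc_lt_last b).ne', kapTuple6_last, kapTuple6_last]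
  | cast j =>
    rw [Function.comp_apply, (Fin.castSucc_injective m).swap_apply, kapTuple6_castSucc,
      kapTuple6_castSucc, Perm.mul_apply]

lemma isLDecomp_kapTuple6 (hG : IsKSub E m G) (σ : Perm (Fin m)) :
    IsLDecomp E (kapTuple6 E G σ) := by
  have hsing : ∀ i, kapTuple6 E G σ i.castSucc = {G.orderEmbOfFin hG.2 (σ i)} := fun i => by
    rw [kapTuple6_castSucc, singBlock_eq_orderEmbOfFin hG.2]
  refine ⟨fun j hj => ?_, fun a b hab => ?_, ?_⟩
  · induction j using Fin.lastCases with
    | last => simp at hj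
    | cast j => simp [hsing]
  · induction a using Fin.lastCases <;> induction b using Fin.lastCases <;>
      simp only [hsing, kapTuple6_last, disjoint_singleton_left,
        disjoint_singleton_right, mem_sdiff, orderEmbOfFin_mem, not_true, and_false,
        not_false_eq_true]
    · exact absurd rfl hab
    · exact fun h => hab (by simpa [eq_comm] using h)
  · ext x
    rw [mem_sup_univ_fin_succ, kapTuple6_last, mem_sdiff]
    simp only [hsing, mem_singleton]
    constructor
    · rintro (⟨i, rfl⟩ | ⟨hx, -⟩)
      exacts [hG.1 (orderEmbOfFin_mem _ _ _), hx]
    · intro hx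
      by_cases hxG : x ∈ G
      · obtain ⟨i, rfl⟩ := (Set.ext_iff.1 (range_orderEmbOfFin G hG.2) x).2 hxG
        exact .inl ⟨σ.symm i, by simp⟩
      · exact .inr ⟨hx, hxG⟩

lemma idxOf_sort_orderEmbOfFin (hG : G.card = m) (p : Fin m) :
    (G.sort (· ≤ ·)).idxOf (G.orderEmbOfFin hG p) = p := by
  rw [orderEmbOfFin_apply]
  exact (sort_nodup _ _).idxOf_getElem _ _

lemma sum_idxOf_sort_eq_sum_fin {M : Type*} [AddCommMonoid M] (hG : G.card = m)
    (f : ℕ → α → M) :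
    ∑ a ∈ G, f ((G.sort (· ≤ ·)).idxOf a) a =
      ∑ p : Fin m, f p (G.orderEmbOfFin hG p) := by
  refine (sum_nbij (G.orderEmbOfFin hG) (fun p _ => orderEmbOfFin_mem _ _ p)
    (G.orderEmbOfFin hG).injective.injOn ?_ fun p _ => ?_).symm
  · intro a ha
    simpa using (Set.ext_iff.1 (range_orderEmbOfFin G hG) a).2 ha
  · rw [idxOf_sort_orderEmbOfFin]

lemma merge_last_kapTuple6_succAbovePerm (hG : IsKSub E (m + 1) G) (p : Fin (m + 1))
    (τ : Perm (Fin m)) :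
    merge m (kapTuple6 E G (succAbovePerm p τ)) =
      kapTuple6 E (G.erase (G.orderEmbOfFin hG.2 p)) τ := by
  have hmem := orderEmbOfFin_mem G hG.2 p
  have hcard : (G.erase (G.orderEmbOfFin hG.2 p)).card = m := by
    rw [card_erase_of_mem hmem, hG.2, Nat.add_sub_cancel]
  funext j
  induction j using Fin.lastCases with
  | last =>
    rw [merge_self_last, kapTuple6_castSucc, succAbovePerm_last, singBlock_eq_orderEmbOfFin hG.2,
      kapTuple6_last, kapTuple6_last, sdiff_erase (hG.1 hmem), insert_eq]
  | cast j =>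
    rw [merge_apply_of_lt _ (by simp), kapTuple6_castSucc, succAbovePerm_castSucc,
      kapTuple6_castSucc, singBlock_eq_orderEmbOfFin hG.2, singBlock_eq_orderEmbOfFin hcard,
      orderEmbOfFin_erase]

variable {k : Type} [Field k]

lemma kap6_bas (hG : IsKSub E m G) :
    kap6 k E m (bas k (IsKSub E m) G) =
      ∑ σ : Perm (Fin m),
        ((Perm.sign σ : ℤ) : k) • bas k (IsLDecomp E) (kapTuple6 E G σ) :=
  lsum_toSpanSingleton_bas _ hG

lemma sum_sign_smul_bas_merge_kapTuple6_eq_zero (i : Fin m) :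
    ∑ σ : Perm (Fin (m + 1)), ((Perm.sign σ : ℤ) : k) •
      bas k (IsLDecomp E (r := m)) (merge i (kapTuple6 E G σ)) = 0 :=
  sum_sign_smul_eq_zero_of_mul_swap _ Fin.castSucc_lt_succ.ne fun σ => by
    rw [kapTuple6_mul_swap, ← Fin.succ_castSucc]
    exact congrArg _ (merge_comp_swap _ i.castSucc)

lemma ntD_kap6_bas (hG : IsKSub E (m + 1) G) :
    ntD k E m (kap6 k E (m + 1) (bas k (IsKSub E (m + 1)) G)) =
      (-1 : k) ^ (m + 1) • ∑ σ : Perm (Fin (m + 1)), ((Perm.sign σ : ℤ) : k) •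
        bas k (IsLDecomp E) (merge m (kapTuple6 E G σ)) := by
  simp_rw [kap6_bas hG, map_sum, map_smul, ntD_bas (isLDecomp_kapTuple6 hG _), smul_sum]
  rw [sum_comm, sum_range_succ, sum_eq_zero fun i hi => ?_, zero_add]
  · simp_rw [smul_comm ((-1 : k) ^ (m + 1))]
  · simp_rw [smul_comm _ ((-1 : k) ^ (i + 1)), ← smul_sum]
    rw [sum_sign_smul_bas_merge_kapTuple6_eq_zero ⟨i, mem_range.1 hi⟩, smul_zero]

lemma sum_sign_smul_bas_merge_last_kapTuple6 (hG : IsKSub E (m + 1) G) :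
    ∑ σ : Perm (Fin (m + 1)), ((Perm.sign σ : ℤ) : k) •
        bas k (IsLDecomp E) (merge m (kapTuple6 E G σ)) =
      ∑ p : Fin (m + 1), (-1 : k) ^ (p.val + m) •
        kap6 k E m (bas k (IsKSub E m) (G.erase (G.orderEmbOfFin hG.2 p))) := by
  rw [← Fintype.sum_bijective _ succAbovePerm_bijective
    (fun x => ((Perm.sign (succAbovePerm x.1 x.2) : ℤ) : k) •
      bas k (IsLDecomp E) (merge m (kapTuple6 E G (succAbovePerm x.1 x.2))))
    _ fun _ => rfl, Fintype.sum_prod_type]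
  refine sum_congr rfl fun p _ => ?_
  rw [kap6_bas (isKSub_erase hG (orderEmbOfFin_mem _ _ p)), smul_sum]
  refine sum_congr rfl fun τ _ => ?_
  rw [merge_last_kapTuple6_succAbovePerm hG, sign_succAbovePerm, smul_smul]
  push_cast
  rfl

lemma kap6_cD_bas (hG : IsKSub E (m + 1) G) :
    kap6 k E m (cD k E m (bas k (IsKSub E (m + 1)) G)) =
      ∑ p : Fin (m + 1), (-1 : k) ^ (p.val + 1) •
        kap6 k E m (bas k (IsKSub E m) (G.erase (G.orderEmbOfFin hG.2 p))) := by
  rw [cD_bas hG, map_sum]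
  exact (sum_idxOf_sort_eq_sum_fin hG.2
    fun n a => kap6 k E m ((-1 : k) ^ (n + 1) • bas k (IsKSub E m) (G.erase a))).trans
    (sum_congr rfl fun p _ => map_smul _ _ _)

theorem ntD_comp_kap6 : (ntD k E m).comp (kap6 k E (m + 1)) = (kap6 k E m).comp (cD k E m) := by
  refine linearMap_ext_bas fun G hG => ?_
  rw [LinearMap.comp_apply, LinearMap.comp_apply, ntD_kap6_bas hG,
    sum_sign_smul_bas_merge_last_kapTuple6 hG, kap6_cD_bas hG, smul_sum]
  refine sum_congr rfl fun p _ => ?_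
  rw [smul_smul, ← pow_add, show m + 1 + (p + m) = p + 1 + 2 * m by ring, pow_add, pow_mul,
    neg_one_sq, one_pow, mul_one]

end Antisymmetrization

end OneSidedKoszul

open OneSidedKoszul

/-- `κ` is a chain map, both complexes are exact (homology vanishes in every
degree `m ≥ 0`), and in particular `κ` is a quasi-isomorphism. -/
theorem oneSided_kap_quasiIso (k : Type) [Field k] (α : Type) [DecidableEq α]
    [LinearOrder α] (E : Finset α) (hE : E.Nonempty) :
    (∀ m : ℕ, (ntD k E m).comp (kap6 k E (m + 1)) = (kap6 k E m).comp (cD k E m)) ∧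
    ((∀ x : CMod k E 0, ∃ y : CMod k E 1, cD k E 0 y = x) ∧
      (∀ (m : ℕ) (x : CMod k E (m + 1)), cD k E m x = 0 →
        ∃ y : CMod k E (m + 2), cD k E (m + 1) y = x)) ∧
    ((∀ x : NtMod k E 0, ∃ y : NtMod k E 1, ntD k E 0 y = x) ∧
      (∀ (m : ℕ) (x : NtMod k E (m + 1)), ntD k E m x = 0 →
        ∃ y : NtMod k E (m + 2), ntD k E (m + 1) y = x)) := by
  have he := E.isLeast_min' hE
  refine ⟨fun _ => ntD_comp_kap6,
    ⟨fun x => ?_, fun _ _ => ?_⟩, ⟨fun x => ?_, fun _ _ => ?_⟩⟩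
  · exact ⟨_, LinearMap.congr_fun (cD_zero_comp_koszulHomotopy he.1) x⟩
  · exact exists_apply_eq_of_homotopy (cD_comp_koszulHomotopy_add_koszulHomotopy_comp_cD he)
  · exact ⟨_, LinearMap.congr_fun (ntD_zero_comp_barHomotopy hE) x⟩
  · exact exists_apply_eq_of_homotopy ntD_comp_barHomotopy_add_barHomotopy_comp_ntD
end

section
/- Let P be a finite partially ordered set with n ≥ 1 elements and let m be a maximal element of P. For an order-preserving bijection f : P ∖ {m} → {1, …, n−1} and an integer i with max{ f(p) : p ∈ P, p < m } < i ≤ n (the maximum over the empty set being 0), define f^i : P → {1, …, n} by f^i(m) = i, f^i(x) = f(x) if f(x) < i, and f^i(x) = f(x) + 1 if f(x) ≥ i. Then: (1) each such f^i is an order-preserving bijection P → {1, …, n}, and the assignment (f, i) ↦ f^i is a bijection onto the set of all order-preserving bijections P → {1, …, n}; (2) if x_1, …, x_n is a fixed enumeration of P with x_n = m, and ε(g) denotes the signature of the permutation j ↦ g(x_j) for an order-preserving bijection g : P → {1,…,n} (respectively j ↦ f(x_j), j ≤ n−1, for f on P ∖ {m}), then ε(f^i) = (−1)^{n−i} ε(f).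 -/
/-
A linear extension `g` of `P` is determined by `i = g m` and by its restriction to `P ∖ {m}`,
renumbered by the order isomorphism `succAboveNat i : ℕ → ℕ ∖ {i}`; maximality of `m` and
`max {f p : p < m} < i` are exactly what makes the inserted value `i` compatible with the order.
Counting inversions of `j ↦ f^i(x_j)` row by row, the last row (the position of `m`) contributes
one inversion for each of the `n - i` values above `i`, while the remaining rows are those of
`j ↦ f(x_j)` after the strictly monotone renumbering, which preserves inversions.
-/

open Finset

/-- `f` is an order-preserving bijection (linear extension) from the finite poset
`β` onto the finite set `s ⊆ ℕ` (with its usual order). -/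
def OPBij {β : Type} [Preorder β] (f : β → ℕ) (s : Finset ℕ) : Prop :=
  Monotone f ∧ Function.Injective f ∧ (∀ x, f x ∈ s) ∧ ∀ y ∈ s, ∃ x, f x = y

/-- The extension `f^i : P → ℕ` of `f : P ∖ {m} → ℕ`: `f^i(m) = i`,
`f^i(x) = f(x)` if `f(x) < i`, and `f^i(x) = f(x) + 1` if `f(x) ≥ i`. -/
def extMap {P : Type} [DecidableEq P] (m : P) (f : {x : P // x ≠ m} → ℕ) (i : ℕ)
    (x : P) : ℕ :=
  if h : x = m then i
  else if f ⟨x, h⟩ < i then f ⟨x, h⟩ else f ⟨x, h⟩ + 1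

/-- `max{f(p) : p ∈ P, p < m}`, the maximum over the empty set being `0`. -/
def lowerBndSup {P : Type} [PartialOrder P] [Fintype P] [DecidableEq P]
    [DecidableRel ((· < ·) : P → P → Prop)] (m : P) (f : {x : P // x ≠ m} → ℕ) : ℕ :=
  (Finset.univ.filter (fun x : {x : P // x ≠ m} => (x : P) < m)).sup f

/-- The signature `ε(g) = (−1)^{#inversions}` of a finite sequence `g` of natural
numbers (for an injective sequence this is the signature of the associated
permutation). -/
def epsN {r : ℕ} (g : Fin r → ℕ) : ℤ :=
  (-1 : ℤ) ^ (Finset.univ.filter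
    (fun q : Fin r × Fin r => q.1 < q.2 ∧ g q.2 < g q.1)).card

/-- The sequence `j ↦ f(x_j)`, `j ≤ n − 1`, associated to `f : P ∖ {m} → ℕ` and an
enumeration `x` of `P` whose last value is `m` (the junk value `0` is never used,
since `x_j ≠ m` for `j ≤ n − 1`). -/
def restrictSeq {P : Type} [DecidableEq P] {n : ℕ} (m : P) (x : Fin n → P)
    (f : {y : P // y ≠ m} → ℕ) (j : Fin (n - 1)) : ℕ :=
  if h : x (Fin.castLE (Nat.sub_le n 1) j) = m then 0
  else f ⟨x (Fin.castLE (Nat.sub_le n 1) j), h⟩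

/-- The strictly monotone enumeration of `ℕ ∖ {i}`. -/
def succAboveNat (i a : ℕ) : ℕ := if a < i then a else a + 1

def predAboveNat (i b : ℕ) : ℕ := if b < i then b else b - 1

section SuccAboveNat

variable {i : ℕ}

theorem succAboveNat_strictMono (i : ℕ) : StrictMono (succAboveNat i) := by
  intro a b hab
  unfold succAboveNat
  split_ifs <;> omega

theorem succAboveNat_of_lt {a : ℕ} (h : a < i) : succAboveNat i a = a := if_pos h

theorem succAboveNat_ne (i a : ℕ) : succAboveNat i a ≠ i := by
  unfold succAboveNat
  split_ifs <;> omega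

theorem predAboveNat_monotone (i : ℕ) : Monotone (predAboveNat i) := by
  intro a b hab
  unfold predAboveNat
  split_ifs <;> omega

theorem predAboveNat_succAboveNat (i a : ℕ) : predAboveNat i (succAboveNat i a) = a := by
  unfold predAboveNat succAboveNat
  split_ifs <;> omega

theorem succAboveNat_predAboveNat {b : ℕ} (hb : b ≠ i) :
    succAboveNat i (predAboveNat i b) = b := by
  unfold predAboveNat succAboveNat
  split_ifs <;> omega

theorem predAboveNat_injOn : Set.InjOn (predAboveNat i) {i}ᶜ := fun a ha b hb hab => by
  rw [← succAboveNat_predAboveNat ha, ← succAboveNat_predAboveNat hb, hab]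

theorem succAboveNat_mem_Icc {n a : ℕ} (hi : i ∈ Icc 1 n) (ha : a ∈ Icc 1 (n - 1)) :
    succAboveNat i a ∈ Icc 1 n := by
  simp only [mem_Icc, succAboveNat] at *
  split_ifs <;> omega

theorem predAboveNat_mem_Icc {n b : ℕ} (hi : i ∈ Icc 1 n) (hb : b ∈ Icc 1 n) (hbi : b ≠ i) :
    predAboveNat i b ∈ Icc 1 (n - 1) := by
  simp only [mem_Icc, predAboveNat] at *
  split_ifs <;> omega

end SuccAboveNat

section ExtMap

variable {P : Type} [DecidableEq P] {m : P}

@[simp]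
theorem extMap_self (f : {x : P // x ≠ m} → ℕ) (i : ℕ) : extMap m f i m = i :=
  dif_pos rfl

@[simp]
theorem extMap_coe (f : {x : P // x ≠ m} → ℕ) (i : ℕ) (z : {x : P // x ≠ m}) :
    extMap m f i z = succAboveNat i (f z) :=
  dif_neg z.2

theorem extMap_injective {f g : {x : P // x ≠ m} → ℕ} {i j : ℕ}
    (h : extMap m f i = extMap m g j) : f = g ∧ i = j := by
  have hij : i = j := by simpa using congrFun h m
  subst hij
  refine ⟨funext fun z => (succAboveNat_strictMono i).injective ?_, rfl⟩
  simpa using congrFun h z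

theorem extMap_predAboveNat {g : P → ℕ} (hg : ∀ z : {x : P // x ≠ m}, g z ≠ g m) :
    extMap m (fun z => predAboveNat (g m) (g z)) (g m) = g := by
  funext p
  by_cases hp : p = m
  · subst hp
    exact extMap_self _ _
  · exact (extMap_coe _ _ ⟨p, hp⟩).trans (succAboveNat_predAboveNat (hg ⟨p, hp⟩))

end ExtMap

section LowerBndSup

variable {P : Type} [PartialOrder P] [Fintype P] [DecidableEq P]
  [DecidableRel ((· < ·) : P → P → Prop)] {m : P}

theorem lowerBndSup_lt_iff {f : {x : P // x ≠ m} → ℕ} {i : ℕ} (hi : 0 < i) :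
    lowerBndSup m f < i ↔ ∀ z : {x : P // x ≠ m}, (z : P) < m → f z < i := by
  simp [lowerBndSup, Finset.sup_lt_iff hi]

end LowerBndSup

theorem OPBij.image_univ {β : Type} [Preorder β] [Fintype β] {f : β → ℕ} {s : Finset ℕ}
    (hf : OPBij f s) : univ.image f = s := by
  ext y
  simp only [mem_image, mem_univ, true_and]
  exact ⟨fun ⟨x, hx⟩ => hx ▸ hf.2.2.1 x, hf.2.2.2 y⟩

theorem card_filter_comp_of_injective {α : Type} [Fintype α] {g : α → ℕ}
    (hg : Function.Injective g) (p : ℕ → Prop) [DecidablePred p] :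
    #{a | p (g a)} = #((univ.image g).filter p) := by
  rw [filter_image, card_image_of_injective _ hg]

theorem OPBij.card_filter_lt_comp {α β : Type} [Preorder β] [Fintype α] [Fintype β]
    {h : β → ℕ} {n : ℕ} (hh : OPBij h (Icc 1 n)) {x : α → β} (hx : Function.Bijective x)
    (i : ℕ) : #{a | i < h (x a)} = n - i := by
  classical
  have himage : univ.image (h ∘ x) = Icc 1 n := by
    rw [← image_image, image_univ_of_surjective hx.2, hh.image_univ]
  have hfilter : (Icc 1 n).filter (i < ·) = Ioc i n := by
    ext k
    simp only [mem_filter, mem_Icc, mem_Ioc]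
    omega
  calc #{a | i < h (x a)} = #((univ.image (h ∘ x)).filter (i < ·)) :=
        card_filter_comp_of_injective (hh.2.1.comp hx.1) (i < ·)
    _ = n - i := by rw [himage, hfilter, Nat.card_Ioc]

def inversions {r : ℕ} (g : Fin r → ℕ) : Finset (Fin r × Fin r) :=
  {q | q.1 < q.2 ∧ g q.2 < g q.1}

theorem epsN_eq_neg_one_pow {r : ℕ} (g : Fin r → ℕ) : epsN g = (-1) ^ #(inversions g) := rfl

theorem inversions_comp_of_strictMono {r : ℕ} {φ : ℕ → ℕ} (hφ : StrictMono φ) (g : Fin r → ℕ) :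
    inversions (φ ∘ g) = inversions g := by
  simp only [inversions, Function.comp_apply, hφ.lt_iff_lt]

theorem card_inversions_castSucc {r : ℕ} (g : Fin (r + 1) → ℕ) :
    #(inversions g) = #(inversions (g ∘ Fin.castSucc)) + #{a | g (Fin.last r) < g a} := by
  have hlast (a : Fin r) : ¬Fin.last r < a.castSucc := not_lt.2 (Fin.le_last _)
  simp only [inversions, card_filter, Fintype.sum_prod_type_right, Fin.sum_univ_castSucc (n := r),
    Fin.castSucc_lt_castSucc_iff, Fin.castSucc_lt_last, hlast, Function.comp_apply, true_and,
    false_and, if_false, add_zero, lt_irrefl]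

theorem extMap_comp_castSucc {P : Type} [DecidableEq P] {m : P} {r : ℕ} {x : Fin (r + 1) → P}
    (hx : Function.Injective x) (hxm : x (Fin.last r) = m) (f : {y : P // y ≠ m} → ℕ) (i : ℕ) :
    (fun j => extMap m f i (x j)) ∘ Fin.castSucc = succAboveNat i ∘ restrictSeq m x f := by
  funext j
  have hj : x j.castSucc ≠ m := hxm ▸ hx.ne (Fin.castSucc_lt_last j).ne
  have hcast : Fin.castLE (Nat.sub_le (r + 1) 1) j = j.castSucc := Fin.ext rfl
  simp only [Function.comp_apply, restrictSeq, hcast, dif_neg hj]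
  exact extMap_coe f i ⟨_, hj⟩

section Insertion

variable {P : Type} [PartialOrder P] [Fintype P] [DecidableEq P]
  [DecidableRel ((· < ·) : P → P → Prop)] {n : ℕ} {m : P}

theorem extMap_OPBij (hm : IsMax m) {f : {x : P // x ≠ m} → ℕ}
    (hf : OPBij f (Icc 1 (n - 1))) {i : ℕ} (hi : lowerBndSup m f < i) (hin : i ≤ n) :
    OPBij (extMap m f i) (Icc 1 n) := by
  obtain ⟨hmono, hinj, hmem, hsurj⟩ := hf
  have hi_mem : i ∈ Icc 1 n := mem_Icc.2 ⟨by omega, hin⟩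
  have hlt : ∀ z : {x : P // x ≠ m}, (z : P) < m → f z < i :=
    (lowerBndSup_lt_iff (by omega)).1 hi
  refine ⟨?_, ?_, ?_, ?_⟩
  · intro a b hab
    by_cases hb : b = m
    · rw [hb] at hab ⊢
      by_cases ha : a = m
      · rw [ha]
      lift a to {x : P // x ≠ m} using ha
      have ha' : f a < i := hlt a (lt_of_le_of_ne hab a.2)
      rw [extMap_self, extMap_coe, succAboveNat_of_lt ha']
      exact ha'.le
    · lift b to {x : P // x ≠ m} using hb
      lift a to {x : P // x ≠ m} using fun ha => b.2 (hm.eq_of_le (ha ▸ hab)).symm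
      simp only [extMap_coe]
      exact (succAboveNat_strictMono i).monotone (hmono hab)
  · intro a b hab
    by_cases ha : a = m <;> by_cases hb : b = m
    · rw [ha, hb]
    · lift b to {x : P // x ≠ m} using hb
      simp only [ha, extMap_self, extMap_coe] at hab
      exact absurd hab.symm (succAboveNat_ne i _)
    · lift a to {x : P // x ≠ m} using ha
      simp only [hb, extMap_self, extMap_coe] at hab
      exact absurd hab (succAboveNat_ne i _)
    · lift a to {x : P // x ≠ m} using ha
      lift b to {x : P // x ≠ m} using hb
      simp only [extMap_coe] at hab
      exact congrArg Subtype.val (hinj ((succAboveNat_strictMono i).injective hab))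
  · intro p
    by_cases hp : p = m
    · subst hp
      simpa using hi_mem
    · exact (extMap_coe f i ⟨p, hp⟩).symm ▸ succAboveNat_mem_Icc hi_mem (hmem _)
  · intro y hy
    by_cases hyi : y = i
    · exact ⟨m, by simp [hyi]⟩
    · obtain ⟨z, hz⟩ := hsurj _ (predAboveNat_mem_Icc hi_mem hy hyi)
      exact ⟨z, by rw [extMap_coe, hz, succAboveNat_predAboveNat hyi]⟩

theorem exists_extMap_eq {g : P → ℕ} (hg : OPBij g (Icc 1 n)) :
    ∃ (f : {x : P // x ≠ m} → ℕ) (i : ℕ),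
      OPBij f (Icc 1 (n - 1)) ∧ lowerBndSup m f < i ∧ i ≤ n ∧ extMap m f i = g := by
  obtain ⟨hmono, hinj, hmem, hsurj⟩ := hg
  have hne : ∀ z : {x : P // x ≠ m}, g z ≠ g m := fun z h => z.2 (hinj h)
  have hgm := mem_Icc.1 (hmem m)
  refine ⟨fun z => predAboveNat (g m) (g z), g m, ⟨?_, ?_, ?_, ?_⟩, ?_, hgm.2,
    extMap_predAboveNat hne⟩
  · exact fun a b hab => predAboveNat_monotone _ (hmono hab)
  · exact fun a b hab => Subtype.val_injective <| hinj <| predAboveNat_injOn (hne a) (hne b) hab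
  · exact fun z => predAboveNat_mem_Icc (hmem m) (hmem z) (hne z)
  · intro y hy
    obtain ⟨p, hp⟩ := hsurj _ (succAboveNat_mem_Icc (hmem m) hy)
    have hpm : p ≠ m := by rintro rfl; exact succAboveNat_ne _ y hp.symm
    exact ⟨⟨p, hpm⟩, by simp only [hp, predAboveNat_succAboveNat]⟩
  · refine (lowerBndSup_lt_iff (by omega)).2 fun z hz => ?_
    have hlt : g z < g m := lt_of_le_of_ne (hmono hz.le) (hne z)
    simp [predAboveNat, hlt]

theorem epsN_extMap_comp (hm : IsMax m) {r : ℕ} {x : Fin (r + 1) → P}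
    (hx : Function.Bijective x) (hxm : x (Fin.last r) = m) {f : {x : P // x ≠ m} → ℕ}
    (hf : OPBij f (Icc 1 r)) {i : ℕ} (hi : lowerBndSup m f < i) (hin : i ≤ r + 1) :
    epsN (fun j => extMap m f i (x j)) = (-1) ^ (r + 1 - i) * epsN (restrictSeq m x f) := by
  have hcount : #{a | i < extMap m f i (x a)} = r + 1 - i :=
    (extMap_OPBij hm hf hi hin).card_filter_lt_comp hx i
  rw [epsN_eq_neg_one_pow, epsN_eq_neg_one_pow, card_inversions_castSucc,
    extMap_comp_castSucc hx.1 hxm, inversions_comp_of_strictMono (succAboveNat_strictMono i),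
    hxm, extMap_self, hcount, pow_add, mul_comm]

end Insertion

/-- Insertion of a maximal element into linear extensions: `(f, i) ↦ f^i` is a
bijection onto the linear extensions of `P`, and `ε(f^i) = (−1)^{n−i} ε(f)`. -/
theorem linearExtension_insertion (P : Type) [PartialOrder P] [Fintype P]
    [DecidableEq P] [DecidableRel ((· < ·) : P → P → Prop)]
    (n : ℕ) (hn : 1 ≤ n) (m : P) (hm : IsMax m) :
    (∀ f : {x : P // x ≠ m} → ℕ, OPBij f (Finset.Icc 1 (n - 1)) →
      ∀ i : ℕ, lowerBndSup m f < i → i ≤ n →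
        OPBij (extMap m f i) (Finset.Icc 1 n)) ∧
    (∀ f g : {x : P // x ≠ m} → ℕ, ∀ i j : ℕ,
      OPBij f (Finset.Icc 1 (n - 1)) → lowerBndSup m f < i → i ≤ n →
      OPBij g (Finset.Icc 1 (n - 1)) → lowerBndSup m g < j → j ≤ n →
      extMap m f i = extMap m g j → f = g ∧ i = j) ∧
    (∀ g : P → ℕ, OPBij g (Finset.Icc 1 n) →
      ∃ (f : {x : P // x ≠ m} → ℕ) (i : ℕ),
        OPBij f (Finset.Icc 1 (n - 1)) ∧ lowerBndSup m f < i ∧ i ≤ n ∧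
        extMap m f i = g) ∧
    (∀ x : Fin n → P, Function.Bijective x → x ⟨n - 1, by omega⟩ = m →
      ∀ f : {y : P // y ≠ m} → ℕ, OPBij f (Finset.Icc 1 (n - 1)) →
      ∀ i : ℕ, lowerBndSup m f < i → i ≤ n →
        epsN (fun j : Fin n => extMap m f i (x j)) =
          (-1 : ℤ) ^ (n - i) * epsN (restrictSeq m x f)) := by
  refine ⟨fun f hf i hi hin => extMap_OPBij hm hf hi hin,
    fun f g i j _ _ _ _ _ _ => extMap_injective, fun g hg => exists_extMap_eq hg, ?_⟩
  obtain ⟨r, rfl⟩ : ∃ r, n = r + 1 := ⟨n - 1, by omega⟩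
  intro x hx hxm f hf i hi hin
  exact epsN_extMap_comp hm hx hxm hf hi hin
end
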